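/- In the setting of the Mirror Descent guarantee — Q ⊆ ℝ^d nonempty compact convex, N a norm on ℝ^d with dual norm N*, ω : Q → ℝ (1/σ)-strongly convex with respect to N, z₀ ∈ ℝ^d, y₀ the maximizer of ⟨z₀,·⟩ − ω over Q, D ≥ sup_{y∈Q}(ω(y) − ω(y₀) − ⟨z₀, y−y₀⟩), f : Q → ℝ convex, T a positive integer, η = √(2D/(Tσρ²)), iterates given by y_t maximizing ⟨z_t,·⟩ − ω over Q, g_t a subgradient of f at y_t on Q with N*(g_t) ≤ ρ, and z_{t+1} = z_t − η g_t for t = 0,…,T−1 — the averaged iterate ȳ = (1/T)·Σ_{t=0}^{T−1} y_t satisfies f(ȳ) − min_{y ∈ Q} f(y) ≤ √(2·D·σ·ρ²/T). In particular f(ȳ) − min_Q f ≤ ε whenever T ≥ 2·D·σ·ρ²/ε². -/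

import Mathlib

/-!
Mirror descent is analysed through the Bregman potential `V_t(u) = ω u - ω y_t - ⟨z_t, u - y_t⟩`.
One step lowers it by at least `η ⟨g_t, y_t - u⟩ - σ η² ρ² / 2`: strong convexity of `ω` absorbs
`η ⟨g_t, y_t - y_{t+1}⟩ ≤ η ρ N(y_{t+1} - y_t)` by AM-GM. Telescoping bounds the regret
`Σ_t ⟨g_t, y_t - u⟩` by `D / η + T σ η ρ² / 2`, which the chosen `η` makes `√(2 D σ ρ² T)`, and
convexity of `f` turns the regret bound into the bound for the average iterate. When `D = 0`,
strong convexity forces `Q` to be a single point.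
-/

open Finset

/-- The standard inner product on `ℝ^d`. -/
noncomputable def dotp {d : ℕ} (x y : Fin d → ℝ) : ℝ := ∑ i, x i * y i

/-- The dual norm `N*(z) = sup {⟨z,x⟩ : N(x) ≤ 1}`. -/
noncomputable def dualNorm {d : ℕ} (N : (Fin d → ℝ) → ℝ) (z : Fin d → ℝ) : ℝ :=
  sSup ((fun x => dotp z x) '' {x | N x ≤ 1})

theorem Seminorm.exists_pos_mul_norm_le {E : Type*} [NormedAddCommGroup E] [NormedSpace ℝ E]
    [FiniteDimensional ℝ E] (p : Seminorm ℝ E) (hp : ∀ x, p x = 0 → x = 0) :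
    ∃ m > 0, ∀ x, m * ‖x‖ ≤ p x := by
  have hcont : Continuous p := continuousOn_univ.mp (p.convexOn.continuousOn isOpen_univ)
  obtain ⟨m, hm, hmin⟩ := (isCompact_sphere (0 : E) 1).exists_forall_le' hcont.continuousOn
    (a := 0) fun x hx => (apply_nonneg p x).lt_of_ne' fun h => by
      simp [hp x h] at hx
  refine ⟨m, hm, fun x => ?_⟩
  rcases eq_or_ne x 0 with rfl | hx
  · simp
  have hxn : 0 < ‖x‖ := norm_pos_iff.mpr hx
  have hunit := hmin (‖x‖⁻¹ • x) (by simp [norm_smul, hxn.ne'])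
  rw [map_smul_eq_mul, norm_inv, norm_norm] at hunit
  calc m * ‖x‖ ≤ ‖x‖⁻¹ * p x * ‖x‖ := by gcongr
    _ = p x := by field_simp

lemma dotp_eq_dotProduct {d : ℕ} (x y : Fin d → ℝ) : dotp x y = x ⬝ᵥ y := rfl

lemma dotp_le_dualNorm_mul {d : ℕ} (p : Seminorm ℝ (Fin d → ℝ)) (hp : ∀ x, p x = 0 → x = 0)
    (z v : Fin d → ℝ) : dotp z v ≤ dualNorm p z * p v := by
  obtain ⟨m, hm, hmp⟩ := p.exists_pos_mul_norm_le hp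
  have hbdd : BddAbove ((fun x => dotp z x) '' {x | p x ≤ 1}) := by
    refine ((isCompact_closedBall (0 : Fin d → ℝ) m⁻¹).bddAbove_image
      (by unfold dotp; fun_prop)).mono (Set.image_mono fun x hx => ?_)
    rw [mem_closedBall_zero_iff, ← one_div, le_div_iff₀' hm]
    exact (hmp x).trans hx
  rcases (apply_nonneg p v).eq_or_lt with hv | hv
  · simp [hp v hv.symm, dotp_eq_dotProduct]
  have hunit : dotp z ((p v)⁻¹ • v) ≤ dualNorm p z :=
    le_csSup hbdd ⟨_, by simp [map_smul_eq_mul, abs_of_pos hv, hv.ne'], rfl⟩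
  rw [dotp_eq_dotProduct, dotProduct_smul, smul_eq_mul, inv_mul_le_iff₀ hv] at hunit
  rwa [mul_comm]

/-- The Bregman divergence of `ω` between `u` and `y`, with the subgradient `z` of `ω` at `y` in
place of `∇ω(y)`: for the iterates, `y` maximizes `⟨z, ·⟩ - ω` on `Q`. -/
noncomputable def bregman {d : ℕ} (ω : (Fin d → ℝ) → ℝ) (z y u : Fin d → ℝ) : ℝ :=
  ω u - ω y - dotp z (u - y)

section Bregman

variable {d : ℕ} {Q : Set (Fin d → ℝ)} {ω : (Fin d → ℝ) → ℝ}

lemma bregman_self (z y : Fin d → ℝ) : bregman ω z y y = 0 := by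
  simp [bregman, dotp_eq_dotProduct]

lemma bregman_sub_bregman (z g y v u : Fin d → ℝ) (η : ℝ) :
    bregman ω z y u - bregman ω (z - η • g) v u = bregman ω z y v + η * dotp g (v - u) := by
  simp only [bregman, dotp_eq_dotProduct, dotProduct_sub, sub_dotProduct, smul_dotProduct,
    smul_eq_mul]
  ring

lemma subgradient_of_maximizer {z y : Fin d → ℝ}
    (h : ∀ v ∈ Q, dotp z v - ω v ≤ dotp z y - ω y) : ∀ v ∈ Q, ω y + dotp z (v - y) ≤ ω v := by
  intro v hv
  have hmax := h v hv
  rw [dotp_eq_dotProduct, dotp_eq_dotProduct] at hmax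
  rw [dotp_eq_dotProduct, dotProduct_sub]
  linarith

lemma mul_dotp_le_bregman_sub_bregman {σ η ρ a : ℝ} (hσ : 0 < σ) (hη : 0 ≤ η)
    {z g y v u : Fin d → ℝ} (hstrong : 1 / (2 * σ) * a ^ 2 ≤ bregman ω z y v)
    (hpair : dotp g (y - v) ≤ ρ * a) :
    η * dotp g (y - u) ≤
      bregman ω z y u - bregman ω (z - η • g) v u + σ * η ^ 2 * ρ ^ 2 / 2 := by
  have hsplit : dotp g (y - u) = dotp g (y - v) + dotp g (v - u) := by
    simp only [dotp_eq_dotProduct, dotProduct_sub]; ring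
  have hyoung : η * (ρ * a) ≤ 1 / (2 * σ) * a ^ 2 + σ * η ^ 2 * ρ ^ 2 / 2 := by
    have := sq_nonneg (a - σ * η * ρ)
    rw [one_div_mul_eq_div, div_add' _ _ _ (by positivity), le_div_iff₀ (by positivity)]
    nlinarith
  rw [bregman_sub_bregman, hsplit]
  nlinarith [mul_le_mul_of_nonneg_left hpair hη]

lemma sub_le_dotp_of_subgradient {f : (Fin d → ℝ) → ℝ} {g y u : Fin d → ℝ}
    (h : ∀ v ∈ Q, f y + dotp g (v - y) ≤ f v) (hu : u ∈ Q) : f y - f u ≤ dotp g (y - u) := by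
  have hsub := h u hu
  rw [dotp_eq_dotProduct, ← neg_sub, dotProduct_neg] at hsub
  rw [dotp_eq_dotProduct]
  linarith

end Bregman

lemma tuned_step_size {D σ ρ T η : ℝ} (hD : 0 < D) (hσ : 0 < σ) (hρ : 0 < ρ) (hT : 0 < T)
    (hη : η = √(2 * D / (T * σ * ρ ^ 2))) :
    D + T * (σ * η ^ 2 * ρ ^ 2 / 2) = η * (T * √(2 * D * σ * ρ ^ 2 / T)) := by
  have hηsq : η ^ 2 = 2 * D / (T * σ * ρ ^ 2) := by rw [hη, Real.sq_sqrt (by positivity)]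
  have hprod : η * √(2 * D * σ * ρ ^ 2 / T) = 2 * D / T := by
    rw [hη, ← Real.sqrt_mul (by positivity), ← Real.sqrt_sq (by positivity : 0 ≤ 2 * D / T)]
    congr 1
    field_simp
  calc D + T * (σ * η ^ 2 * ρ ^ 2 / 2) = 2 * D := by rw [hηsq]; field_simp; ring
    _ = η * (T * √(2 * D * σ * ρ ^ 2 / T)) := by
        rw [mul_left_comm, hprod]; field_simp

section MirrorDescent

variable {d : ℕ} {Q : Set (Fin d → ℝ)} {ω : (Fin d → ℝ) → ℝ} {σ ρ η : ℝ} {T : ℕ}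
  {y z g : ℕ → Fin d → ℝ}

/-- The last step is compared with `u` itself, whose potential `bregman ω _ u u` vanishes, so
that the sum telescopes although `y T` is not an iterate. -/
theorem mul_sum_dotp_le_bregman_add (p : Seminorm ℝ (Fin d → ℝ)) (hσ : 0 < σ) (hη : 0 ≤ η)
    (hT : 0 < T) (hy : ∀ t < T, y t ∈ Q)
    (hstrong : ∀ t < T, ∀ v ∈ Q, 1 / (2 * σ) * p (v - y t) ^ 2 ≤ bregman ω (z t) (y t) v)
    (hpair : ∀ t < T, ∀ w, dotp (g t) w ≤ ρ * p w)
    (hz : ∀ t < T, z (t + 1) = z t - η • g t) {u : Fin d → ℝ} (hu : u ∈ Q) :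
    η * ∑ t ∈ range T, dotp (g t) (y t - u) ≤
      bregman ω (z 0) (y 0) u + T * (σ * η ^ 2 * ρ ^ 2 / 2) := by
  set W : ℕ → ℝ := fun s => if s < T then bregman ω (z s) (y s) u else 0
  have hstep : ∀ t ∈ range T,
      η * dotp (g t) (y t - u) ≤ W t - W (t + 1) + σ * η ^ 2 * ρ ^ 2 / 2 := by
    intro t ht
    have ht : t < T := mem_range.mp ht
    set v := if t + 1 < T then y (t + 1) else u
    have hv : v ∈ Q := by unfold v; split_ifs with h; exacts [hy _ h, hu]
    have hWt : W t = bregman ω (z t) (y t) u := if_pos ht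
    have hWt' : W (t + 1) = bregman ω (z t - η • g t) v u := by
      unfold W v; split_ifs; exacts [by rw [hz t ht], (bregman_self _ _).symm]
    rw [hWt, hWt']
    exact mul_dotp_le_bregman_sub_bregman hσ hη (hstrong t ht v hv)
      ((hpair t ht _).trans_eq (by rw [map_sub_rev]))
  calc η * ∑ t ∈ range T, dotp (g t) (y t - u)
      ≤ ∑ t ∈ range T, (W t - W (t + 1) + σ * η ^ 2 * ρ ^ 2 / 2) := by
        rw [mul_sum]; exact sum_le_sum hstep
    _ = bregman ω (z 0) (y 0) u + T * (σ * η ^ 2 * ρ ^ 2 / 2) := by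
        rw [sum_add_distrib, sum_range_sub', sum_const, card_range, nsmul_eq_mul]
        simp [W, hT]

theorem sum_dotp_le_mul_sqrt (p : Seminorm ℝ (Fin d → ℝ)) (hp : ∀ x, p x = 0 → x = 0)
    (hσ : 0 < σ) (hρ : 0 < ρ) (hT : 0 < T) {D : ℝ}
    (hη : η = √(2 * D / (T * σ * ρ ^ 2))) (hy : ∀ t < T, y t ∈ Q)
    (hstrong : ∀ t < T, ∀ v ∈ Q, 1 / (2 * σ) * p (v - y t) ^ 2 ≤ bregman ω (z t) (y t) v)
    (hD : ∀ v ∈ Q, bregman ω (z 0) (y 0) v ≤ D)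
    (hpair : ∀ t < T, ∀ w, dotp (g t) w ≤ ρ * p w)
    (hz : ∀ t < T, z (t + 1) = z t - η • g t) {u : Fin d → ℝ} (hu : u ∈ Q) :
    ∑ t ∈ range T, dotp (g t) (y t - u) ≤ T * √(2 * D * σ * ρ ^ 2 / T) := by
  have hy0 := hy 0 hT
  rcases (bregman_self (ω := ω) (z 0) (y 0) ▸ hD _ hy0).eq_or_lt with rfl | hDpos
  · have hQ : ∀ v ∈ Q, v = y 0 := by
      intro v hv
      have hsq : p (v - y 0) ^ 2 ≤ 0 :=
        nonpos_of_mul_nonpos_right ((hstrong 0 hT v hv).trans (hD v hv)) (by positivity)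
      exact sub_eq_zero.mp (hp _ (pow_eq_zero_iff two_ne_zero |>.mp (hsq.antisymm (sq_nonneg _))))
    rw [sum_eq_zero fun t ht => by rw [hQ _ (hy t (mem_range.mp ht)), hQ u hu, sub_self,
      dotp_eq_dotProduct, dotProduct_zero]]
    positivity
  have hηpos : 0 < η := hη ▸ Real.sqrt_pos.2 (by positivity)
  refine le_of_mul_le_mul_left ?_ hηpos
  calc η * ∑ t ∈ range T, dotp (g t) (y t - u)
      ≤ bregman ω (z 0) (y 0) u + T * (σ * η ^ 2 * ρ ^ 2 / 2) :=
        mul_sum_dotp_le_bregman_add p hσ hηpos.le hT hy hstrong hpair hz hu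
    _ ≤ D + T * (σ * η ^ 2 * ρ ^ 2 / 2) := by gcongr; exact hD u hu
    _ = η * (T * √(2 * D * σ * ρ ^ 2 / T)) :=
        tuned_step_size hDpos hσ hρ (by exact_mod_cast hT) hη

end MirrorDescent

theorem ConvexOn.map_average_sub_sInf_le {E : Type*} [AddCommGroup E] [Module ℝ E]
    {Q : Set E} {f : E → ℝ} (hf : ConvexOn ℝ Q f) {T : ℕ} (hT : 0 < T) {y : ℕ → E}
    (hy : ∀ t < T, y t ∈ Q) {B : ℝ} (hregret : ∀ u ∈ Q, ∑ t ∈ range T, (f (y t) - f u) ≤ T * B) :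
    f ((1 / (T : ℝ)) • ∑ t ∈ range T, y t) - sInf (f '' Q) ≤ B := by
  have hT' : (0 : ℝ) < T := by exact_mod_cast hT
  have hjensen : f ((1 / (T : ℝ)) • ∑ t ∈ range T, y t) ≤ (1 / T) * ∑ t ∈ range T, f (y t) := by
    have := hf.map_sum_le (t := range T) (w := fun _ => 1 / (T : ℝ)) (p := y)
      (fun _ _ => by positivity) (by simp [hT'.ne']) (fun t ht => hy t (mem_range.mp ht))
    simpa only [← smul_sum, ← mul_sum, smul_eq_mul] using this
  rw [sub_le_comm]
  refine le_csInf ((Set.nonempty_of_mem (hy 0 hT)).image f) ?_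
  rintro _ ⟨u, hu, rfl⟩
  have hu' := hregret u hu
  rw [sum_sub_distrib, sum_const, card_range, nsmul_eq_mul] at hu'
  rw [one_div_mul_eq_div, le_div_iff₀ hT'] at hjensen
  nlinarith

lemma sqrt_div_le_of_div_sq_le {a T ε : ℝ} (hT : 0 < T) (hε : 0 < ε) (h : a / ε ^ 2 ≤ T) :
    √(a / T) ≤ ε := by
  rw [Real.sqrt_le_left hε.le, div_le_iff₀ hT]
  rw [div_le_iff₀ (by positivity)] at h
  linarith

theorem mirror_descent_convergence_general
    (d : ℕ) (Q : Set (Fin d → ℝ))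
    (N : (Fin d → ℝ) → ℝ)
    (hN0 : ∀ x, N x = 0 ↔ x = 0)
    (hNsmul : ∀ (a : ℝ) (x : Fin d → ℝ), N (a • x) = |a| * N x)
    (hNtri : ∀ x y, N (x + y) ≤ N x + N y)
    (σ ρ : ℝ) (hσ : 0 < σ) (hρ : 0 < ρ)
    (ω : (Fin d → ℝ) → ℝ)
    (hstrong : ∀ x ∈ Q, ∀ y ∈ Q, ∀ g : Fin d → ℝ,
      (∀ z ∈ Q, ω x + dotp g (z - x) ≤ ω z) →
      (1 / (2 * σ)) * N (y - x) ^ 2 ≤ ω y - ω x - dotp g (y - x))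
    (f : (Fin d → ℝ) → ℝ) (hf : ConvexOn ℝ Q f)
    (T : ℕ) (hT : 0 < T)
    (D : ℝ)
    (η : ℝ) (hη : η = Real.sqrt (2 * D / (T * σ * ρ ^ 2)))
    (y z g : ℕ → Fin d → ℝ)
    (hymax : ∀ t < T, y t ∈ Q ∧
      ∀ y' ∈ Q, dotp (z t) y' - ω y' ≤ dotp (z t) (y t) - ω (y t))
    (hD : ∀ y' ∈ Q, ω y' - ω (y 0) - dotp (z 0) (y' - y 0) ≤ D)
    (hg : ∀ t < T, (∀ y' ∈ Q, f (y t) + dotp (g t) (y' - y t) ≤ f y') ∧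
      dualNorm N (g t) ≤ ρ)
    (hz : ∀ t < T, z (t + 1) = z t - η • g t) :
    f ((1 / (T : ℝ)) • ∑ t ∈ Finset.range T, y t) - sInf (f '' Q) ≤
        Real.sqrt (2 * D * σ * ρ ^ 2 / T) ∧
    (∀ ε : ℝ, 0 < ε → 2 * D * σ * ρ ^ 2 / ε ^ 2 ≤ (T : ℝ) →
      f ((1 / (T : ℝ)) • ∑ t ∈ Finset.range T, y t) - sInf (f '' Q) ≤ ε) := by
  let p : Seminorm ℝ (Fin d → ℝ) := .of N hNtri fun a x => by rw [hNsmul, Real.norm_eq_abs]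
  have hy : ∀ t < T, y t ∈ Q := fun t ht => (hymax t ht).1
  have hbregman : ∀ t < T, ∀ v ∈ Q, 1 / (2 * σ) * p (v - y t) ^ 2 ≤ bregman ω (z t) (y t) v :=
    fun t ht v hv => hstrong _ (hy t ht) v hv _ (subgradient_of_maximizer (hymax t ht).2)
  have hpair : ∀ t < T, ∀ w, dotp (g t) w ≤ ρ * p w := fun t ht w =>
    (dotp_le_dualNorm_mul p (fun x => (hN0 x).1) (g t) w).trans
      (mul_le_mul_of_nonneg_right (hg t ht).2 (apply_nonneg p w))
  have hregret : ∀ u ∈ Q,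
      ∑ t ∈ range T, (f (y t) - f u) ≤ T * √(2 * D * σ * ρ ^ 2 / T) := fun u hu =>
    (sum_le_sum fun t ht => sub_le_dotp_of_subgradient (hg t (mem_range.mp ht)).1 hu).trans
      (sum_dotp_le_mul_sqrt p (fun x => (hN0 x).1) hσ hρ hT hη hy hbregman hD hpair hz hu)
  have hbound := hf.map_average_sub_sInf_le hT hy hregret
  exact ⟨hbound, fun ε hε hTε => hbound.trans
    (sqrt_div_le_of_div_sq_le (by exact_mod_cast hT) hε hTε)⟩

/-- **Mirror Descent convergence guarantee** (Corollary 2.3 of the paper): under the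
Mirror Descent setup, the averaged iterate `ȳ = (1/T)·Σ_t y_t` satisfies
`f(ȳ) - min_Q f ≤ √(2Dσρ²/T)`; in particular `f(ȳ) - min_Q f ≤ ε` whenever
`T ≥ 2Dσρ²/ε²`. -/
theorem mirror_descent_convergence
    (d : ℕ) (Q : Set (Fin d → ℝ)) (hQne : Q.Nonempty) (hQcomp : IsCompact Q)
    (hQconv : Convex ℝ Q)
    (N : (Fin d → ℝ) → ℝ)
    (hN0 : ∀ x, N x = 0 ↔ x = 0)
    (hNsmul : ∀ (a : ℝ) (x : Fin d → ℝ), N (a • x) = |a| * N x)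
    (hNtri : ∀ x y, N (x + y) ≤ N x + N y)
    (σ ρ : ℝ) (hσ : 0 < σ) (hρ : 0 < ρ)
    (ω : (Fin d → ℝ) → ℝ)
    (hstrong : ∀ x ∈ Q, ∀ y ∈ Q, ∀ g : Fin d → ℝ,
      (∀ z ∈ Q, ω x + dotp g (z - x) ≤ ω z) →
      (1 / (2 * σ)) * N (y - x) ^ 2 ≤ ω y - ω x - dotp g (y - x))
    (f : (Fin d → ℝ) → ℝ) (hf : ConvexOn ℝ Q f)
    (T : ℕ) (hT : 0 < T)
    (D : ℝ)
    (η : ℝ) (hη : η = Real.sqrt (2 * D / (T * σ * ρ ^ 2)))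
    (y z g : ℕ → Fin d → ℝ)
    (hymax : ∀ t < T, y t ∈ Q ∧
      ∀ y' ∈ Q, dotp (z t) y' - ω y' ≤ dotp (z t) (y t) - ω (y t))
    (hD : ∀ y' ∈ Q, ω y' - ω (y 0) - dotp (z 0) (y' - y 0) ≤ D)
    (hg : ∀ t < T, (∀ y' ∈ Q, f (y t) + dotp (g t) (y' - y t) ≤ f y') ∧
      dualNorm N (g t) ≤ ρ)
    (hz : ∀ t < T, z (t + 1) = z t - η • g t) :
    f ((1 / (T : ℝ)) • ∑ t ∈ Finset.range T, y t) - sInf (f '' Q) ≤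
        Real.sqrt (2 * D * σ * ρ ^ 2 / T) ∧
    (∀ ε : ℝ, 0 < ε → 2 * D * σ * ρ ^ 2 / ε ^ 2 ≤ (T : ℝ) →
      f ((1 / (T : ℝ)) • ∑ t ∈ Finset.range T, y t) - sInf (f '' Q) ≤ ε) :=
  mirror_descent_convergence_general d Q N hN0 hNsmul hNtri σ ρ hσ hρ ω hstrong f hf T hT D η hη y z
    g hymax hD hg hz
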